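/- In the group BS(2,3) = ⟨a, b | b a² b⁻¹ = a³⟩, the element w = [b a b⁻¹, a⁻¹] = (bab⁻¹) a⁻¹ (b a⁻¹ b⁻¹) a is nontrivial, but its image is trivial under every group homomorphism from BS(2,3) to a finite group. In particular, BS(2,3) is not residually finite. -/

import Mathlib

/-- The defining relator of the Baumslag–Solitar group BS(2,3):
`b a² b⁻¹ a⁻³` in the free group on two generators (0 ↦ a, 1 ↦ b). -/
def bsRels : Set (FreeGroup (Fin 2)) :=
  {FreeGroup.of 1 * (FreeGroup.of 0) ^ 2 * (FreeGroup.of 1)⁻¹ * ((FreeGroup.of 0)⁻¹) ^ 3}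

/-- The Baumslag–Solitar group BS(2,3). -/
def BS23 : Type := PresentedGroup bsRels

instance : Group BS23 := by unfold BS23; infer_instance

def bsA : BS23 := PresentedGroup.of 0
def bsB : BS23 := PresentedGroup.of 1

/-!
In a finite quotient, `a` has finite order `o`, and `b a² b⁻¹ = a³` forces `a²` and `a³` to have
the same order, so `o` is odd. Then `a` is a power of `a²`, hence `b a b⁻¹` is a power of `a³` and
commutes with `a`, which kills `w = ⁅b a b⁻¹, a⁻¹⁆`.

On the other hand BS(2,3) maps to the HNN extension of `ℤ` along the isomorphism `2ℤ ≅ 3ℤ`,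
`2k ↦ 3k`, and there `t a t⁻¹ · a⁻¹ · t a⁻¹ t⁻¹ · a` is a reduced word (`a ∉ 2ℤ`, `a⁻¹ ∉ 3ℤ`),
so it is nontrivial by Britton's lemma.
-/

open scoped commutatorElement

section Conjugation

variable {G : Type*} [Group G]

theorem commute_conj_of_conj_pow_eq_pow {x y : G} (hx : IsOfFinOrder x) {m n : ℕ}
    (hmn : m.Coprime n) (h : y * x ^ m * y⁻¹ = x ^ n) : Commute (y * x * y⁻¹) x := by
  have hord : orderOf (x ^ m) = orderOf (x ^ n) := by
    rw [← h, ← MulAut.conj_apply, MulEquiv.orderOf_eq]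
  have hgcd : (orderOf x).gcd m = (orderOf x).gcd n := by
    rw [hx.orderOf_pow, hx.orderOf_pow] at hord
    exact (Nat.div_eq_iff_eq_of_dvd_dvd hx.orderOf_pos.ne' (Nat.gcd_dvd_left _ _)
      (Nat.gcd_dvd_left _ _)).mp hord
  have hcop : m.Coprime (orderOf x) :=
    Nat.Coprime.symm <| Nat.eq_one_of_dvd_one <|
      hmn ▸ Nat.dvd_gcd (Nat.gcd_dvd_right _ _) (hgcd ▸ Nat.gcd_dvd_right _ _)
  obtain ⟨k, hk⟩ := exists_pow_eq_self_of_coprime hcop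
  have hpow : y * x * y⁻¹ = (x ^ n) ^ k := by
    rw [← h, conj_pow, hk]
  rw [hpow]
  exact ((Commute.refl x).pow_left n).pow_left k

theorem conj_mul_inv_mul_conj_inv_mul (x y : G) :
    y * x * y⁻¹ * x⁻¹ * (y * x⁻¹ * y⁻¹) * x = ⁅y * x * y⁻¹, x⁻¹⁆ := by
  simp only [commutatorElement_def]
  group

end Conjugation

open Multiplicative HNNExtension

namespace BaumslagSolitar

def scale (m : ℤ) : Multiplicative ℤ →* Multiplicative ℤ :=
  (AddMonoidHom.mulLeft m).toMultiplicative

lemma scale_ofAdd (m k : ℤ) : scale m (ofAdd k) = ofAdd (m * k) := rfl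

lemma scale_injective {m : ℤ} (hm : m ≠ 0) : Function.Injective (scale m) := fun x y h =>
  toAdd.injective <| mul_left_cancel₀ hm (congrArg toAdd h : m * toAdd x = m * toAdd y)

lemma ofAdd_mem_range_scale {m k : ℤ} : ofAdd k ∈ (scale m).range ↔ m ∣ k :=
  ⟨fun ⟨j, hj⟩ => ⟨toAdd j, (congrArg toAdd hj).symm⟩, fun ⟨j, hj⟩ => ⟨ofAdd j, hj ▸ rfl⟩⟩

variable {m n : ℤ} (hm : m ≠ 0) (hn : n ≠ 0)

noncomputable def scaleEquiv : (scale m).range ≃* (scale n).range :=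
  (MonoidHom.ofInjective (scale_injective hm)).symm.trans
    (MonoidHom.ofInjective (scale_injective hn))

lemma coe_scaleEquiv (x : Multiplicative ℤ) :
    (scaleEquiv hm hn ⟨scale m x, x, rfl⟩ : Multiplicative ℤ) = scale n x := by
  have hx : (⟨scale m x, x, rfl⟩ : (scale m).range) =
      MonoidHom.ofInjective (scale_injective hm) x :=
    Subtype.ext (MonoidHom.ofInjective_apply _).symm
  simp [hx, scaleEquiv, MonoidHom.ofInjective_apply]

/-- The HNN extension of `ℤ` along `mℤ ≅ nℤ`, `mk ↦ nk`: a model of BS(m,n) with `b = t`. -/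
abbrev HNN := HNNExtension (Multiplicative ℤ) (scale m).range (scale n).range (scaleEquiv hm hn)

noncomputable def a : HNN hm hn := of (ofAdd 1)

lemma of_ofAdd (k : ℤ) : (of (ofAdd k) : HNN hm hn) = a hm hn ^ k := by
  rw [a, ← map_zpow, ← ofAdd_zsmul, smul_eq_mul, mul_one]

lemma t_mul_a_zpow_mul_inv_t : (t : HNN hm hn) * a hm hn ^ m * t⁻¹ = a hm hn ^ n := by
  have h := equiv_eq_conj (φ := scaleEquiv hm hn) ⟨scale m (ofAdd 1), ofAdd 1, rfl⟩
  rw [coe_scaleEquiv] at h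
  simpa only [scale_ofAdd, mul_one, of_ofAdd] using h.symm

theorem commutatorElement_conj_a_ne_one (hm1 : ¬ m ∣ 1) (hn1 : ¬ n ∣ 1) :
    ⁅(t : HNN hm hn) * a hm hn * t⁻¹, (a hm hn)⁻¹⁆ ≠ 1 := by
  let w : NormalWord.ReducedWord (Multiplicative ℤ) (scale m).range (scale n).range :=
    { head := 1
      toList := [(1, ofAdd 1), (-1, ofAdd (-1)), (1, ofAdd (-1)), (-1, ofAdd 1)]
      chain := by
        simp only [List.isChain_cons_cons, List.isChain_singleton, toSubgroup_one,
          toSubgroup_neg_one, ofAdd_mem_range_scale, dvd_neg]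
        exact ⟨fun h => (hm1 h).elim, fun h => (hn1 h).elim, fun h => (hm1 h).elim, trivial⟩ }
  have hw : w.prod (scaleEquiv hm hn) = ⁅(t : HNN hm hn) * a hm hn * t⁻¹, (a hm hn)⁻¹⁆ := by
    simp [w, NormalWord.ReducedWord.prod, a, commutatorElement_def, mul_assoc, ofAdd_neg]
  intro h
  have hnil := ReducedWord.toList_eq_nil_of_mem_of_range _ w (hw ▸ h ▸ one_mem _)
  simp [w] at hnil

end BaumslagSolitar

open BaumslagSolitar

lemma bsB_mul_bsA_sq_mul_bsB_inv : bsB * bsA ^ 2 * bsB⁻¹ = bsA ^ 3 := by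
  have h := PresentedGroup.one_of_mem (rels := bsRels) rfl
  simp only [map_mul, map_pow, map_inv, inv_pow, mul_inv_eq_one] at h
  exact h

noncomputable def BS23.toHNN : BS23 →* HNN two_ne_zero three_ne_zero :=
  PresentedGroup.toGroup (f := ![a _ _, t]) <| by
    rintro _ rfl
    simpa [mul_inv_eq_one] using t_mul_a_zpow_mul_inv_t two_ne_zero three_ne_zero

lemma BS23.toHNN_bsA : BS23.toHNN bsA = a _ _ := PresentedGroup.toGroup.of _

lemma BS23.toHNN_bsB : BS23.toHNN bsB = t := PresentedGroup.toGroup.of _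

theorem stmt_8 :
    (bsB * bsA * bsB⁻¹) * bsA⁻¹ * (bsB * bsA⁻¹ * bsB⁻¹) * bsA ≠ 1 ∧
    ∀ (H : Type) (_ : Group H) (_ : Finite H) (φ : BS23 →* H),
      φ ((bsB * bsA * bsB⁻¹) * bsA⁻¹ * (bsB * bsA⁻¹ * bsB⁻¹) * bsA) = 1 := by
  simp only [conj_mul_inv_mul_conj_inv_mul]
  refine ⟨fun h => ?_, fun H _ _ φ => ?_⟩
  · apply commutatorElement_conj_a_ne_one two_ne_zero three_ne_zero (by decide) (by decide)
    simpa [map_commutatorElement, BS23.toHNN_bsA, BS23.toHNN_bsB] using congrArg BS23.toHNN h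
  · have hrel : φ bsB * φ bsA ^ 2 * (φ bsB)⁻¹ = φ bsA ^ 3 := by
      simpa using congrArg φ bsB_mul_bsA_sq_mul_bsB_inv
    have hc := commute_conj_of_conj_pow_eq_pow (isOfFinOrder_of_finite _) (by norm_num) hrel
    rw [map_commutatorElement, commutatorElement_eq_one_iff_commute]
    simpa only [map_mul, map_inv] using hc.inv_right
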